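/- Let A ⊂ B be a partially cleft H-extension via γ, γ'. Set γ̄ = γ' * γ * γ'. Then γ̄ * γ * γ̄ = γ̄, and the pair (γ, γ̄) again satisfies all the axioms (i)–(vii) of a partially cleft extension; moreover γ * γ̄ = γ * γ' and γ̄ * γ = γ' * γ. -/

import Mathlib

open TensorProduct

noncomputable section

/-- Convolution product of linear maps `H → B`. -/
def conv {k H B : Type} [CommRing k] [Ring H] [HopfAlgebra k H]
    [Ring B] [Algebra k B] (f g : H →ₗ[k] B) : H →ₗ[k] B :=
  LinearMap.mul' k B ∘ₗ TensorProduct.map f g ∘ₗ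
    (Coalgebra.comul : H →ₗ[k] H ⊗[k] H)

/-- The comultiplication of the tensor product coalgebra `H ⊗ H`. -/
def comulTwo {k H : Type} [CommRing k] [Ring H] [HopfAlgebra k H] :
    H ⊗[k] H →ₗ[k] (H ⊗[k] H) ⊗[k] (H ⊗[k] H) :=
  (TensorProduct.tensorTensorTensorComm k H H H H).toLinearMap ∘ₗ
    TensorProduct.map (Coalgebra.comul (R := k)) (Coalgebra.comul (R := k))

/-- Convolution product in `Hom(H ⊗ H, B)`. -/
def conv2 {k H B : Type} [CommRing k] [Ring H] [HopfAlgebra k H]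
    [Ring B] [Algebra k B] (f g : H ⊗[k] H →ₗ[k] B) : H ⊗[k] H →ₗ[k] B :=
  LinearMap.mul' k B ∘ₗ TensorProduct.map f g ∘ₗ comulTwo

/-- `A = B^{co H} ⊆ B` is a partially cleft `H`-extension via the pair
`(γ, γ')` (Definition 5.1). -/
structure IsPartiallyCleft {k H B : Type} [CommRing k] [Ring H]
    [HopfAlgebra k H] [Ring B] [Algebra k B]
    (ρ : B →ₗ[k] B ⊗[k] H) (γ γ' : H →ₗ[k] B) : Prop where
  /-- (i) `γ(1) = 1` -/
  map_one : γ 1 = 1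
  /-- (ii) `γ` is a comodule map -/
  comod : ∀ h : H, ρ (γ h) =
    (TensorProduct.map γ LinearMap.id) (Coalgebra.comul (R := k) h)
  /-- (ii) `ρ ∘ γ' = (γ' ⊗ S) ∘ Δᶜᵒᵖ` -/
  comod' : ∀ h : H, ρ (γ' h) =
    (TensorProduct.map γ' (HopfAlgebra.antipode (R := k)))
      ((TensorProduct.comm k H H) (Coalgebra.comul (R := k) h))
  /-- `(γ * γ') ∘ M` takes values in the coinvariants -/
  conv_coinv : ∀ h : H, ρ (conv γ γ' h) = conv γ γ' h ⊗ₜ[k] 1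
  /-- (iii) `(γ * γ') ∘ M` is central in `Hom(H ⊗ H, A)` -/
  conv_central : ∀ T : H ⊗[k] H →ₗ[k] B, (∀ x, ρ (T x) = T x ⊗ₜ[k] 1) →
    conv2 (conv γ γ' ∘ₗ LinearMap.mul' k H) T =
      conv2 T (conv γ γ' ∘ₗ LinearMap.mul' k H)
  /-- (iii) each `(γ' * γ)(h)` commutes with the coinvariants -/
  conv'_comm : ∀ (h : H) (a : B), ρ a = a ⊗ₜ[k] 1 →
    conv γ' γ h * a = a * conv γ' γ h
  /-- (iv) `Σ b₀ γ'(b₁) γ(b₂) = b` -/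
  expand : ∀ b : B,
    (LinearMap.mul' k B) ((LinearMap.lTensor B (conv γ' γ)) (ρ b)) = b
  /-- (v) `γ(h) e_l = Σ e_{h₁ l} γ(h₂)` -/
  five : ∀ (h l : H) (ι : Type) (s : Finset ι) (h1 h2 : ι → H),
    Coalgebra.comul (R := k) h = ∑ i ∈ s, h1 i ⊗ₜ[k] h2 i →
    γ h * conv γ γ' l = ∑ i ∈ s, conv γ γ' (h1 i * l) * γ (h2 i)
  /-- (vi) `γ'(l) ẽ_h = Σ ẽ_{h l₁} γ'(l₂)` -/
  six : ∀ (h l : H) (κ : Type) (t : Finset κ) (l1 l2 : κ → H),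
    Coalgebra.comul (R := k) l = ∑ j ∈ t, l1 j ⊗ₜ[k] l2 j →
    γ' l * conv γ' γ h = ∑ j ∈ t, conv γ' γ (h * l1 j) * γ' (l2 j)
  /-- (vii) `Σ γ(h l₁) ẽ_{l₂} = Σ e_{h₁} γ(h₂ l)` -/
  seven : ∀ (h l : H) (ι κ : Type) (s : Finset ι) (t : Finset κ)
    (h1 h2 : ι → H) (l1 l2 : κ → H),
    Coalgebra.comul (R := k) h = ∑ i ∈ s, h1 i ⊗ₜ[k] h2 i →
    Coalgebra.comul (R := k) l = ∑ j ∈ t, l1 j ⊗ₜ[k] l2 j →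
    ∑ j ∈ t, γ (h * l1 j) * conv γ' γ (l2 j) =
      ∑ i ∈ s, conv γ γ' (h1 i) * γ (h2 i * l)

/-! In the convolution algebra `Hom(H, B)`, axioms (ii) and (iv) give `γ * γ' * γ = γ`, so `γ'` is
an inner inverse of `γ` and `γ̄ = γ' * γ * γ'` is a reflexive one, with `γ * γ̄ = γ * γ'` and
`γ̄ * γ = γ' * γ`. Every axiom that sees `γ'` only through `e = γ * γ'` and `ẽ = γ' * γ` therefore
holds for `γ̄` verbatim. For the other two, write `γ̄ = γ' * e`: it is again an anti-comodule map
because `ρ` is multiplicative and `e` is coinvariant, and (vi) passes from `γ'` to `γ' * e` because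
`e` takes values in `A`, which commutes with `ẽ`. -/

section Semigroup

variable {M : Type*} [Semigroup M] {a b : M}

theorem mul_mul_mul_eq_mul_of_mul_mul_eq_self (h : a * (b * a) = a) :
    a * (b * (a * b)) = a * b := by
  rw [← mul_assoc, ← mul_assoc, mul_assoc a b a, h]

theorem mul_mul_mul_eq_mul_of_mul_mul_eq_self' (h : a * (b * a) = a) :
    b * (a * b) * a = b * a := by
  rw [mul_assoc, mul_assoc, h]

theorem mul_mul_mul_mul_mul_eq_of_mul_mul_eq_self (h : a * (b * a) = a) :
    b * (a * b) * a * (b * (a * b)) = b * (a * b) := by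
  rw [mul_mul_mul_eq_mul_of_mul_mul_eq_self' h, mul_assoc, mul_mul_mul_eq_mul_of_mul_mul_eq_self h]

end Semigroup

open WithConv

section Convolution

variable {k H B : Type} [CommRing k] [Ring H] [HopfAlgebra k H] [Ring B] [Algebra k B]

theorem toConv_conv (f g : H →ₗ[k] B) : toConv (conv f g) = toConv f * toConv g := rfl

theorem conv_assoc (f g p : H →ₗ[k] B) : conv (conv f g) p = conv f (conv g p) :=
  toConv_injective <| by simp only [toConv_conv, mul_assoc]

theorem conv_apply_of_comul_eq_sum (f g : H →ₗ[k] B) {l : H} {ι : Type*} {s : Finset ι}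
    {a b : ι → H} (hl : Coalgebra.comul (R := k) l = ∑ i ∈ s, a i ⊗ₜ[k] b i) :
    conv f g l = ∑ i ∈ s, f (a i) * g (b i) := by
  simp [conv, hl]

theorem conv_conv_conv_of_conv_conv_eq_self {f g : H →ₗ[k] B} (h : conv f (conv g f) = f) :
    conv f (conv g (conv f g)) = conv f g ∧ conv (conv g (conv f g)) f = conv g f ∧
      conv (conv (conv g (conv f g)) f) (conv g (conv f g)) = conv g (conv f g) := by
  replace h : toConv f * (toConv g * toConv f) = toConv f := by rw [← toConv_conv, ← toConv_conv, h]
  refine ⟨toConv_injective ?_, toConv_injective ?_, toConv_injective ?_⟩ <;>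
    simp only [toConv_conv]
  exacts [mul_mul_mul_eq_mul_of_mul_mul_eq_self h, mul_mul_mul_eq_mul_of_mul_mul_eq_self' h,
    mul_mul_mul_mul_mul_eq_of_mul_mul_eq_self h]

theorem mulRight_comp_conv_of_commute (f g : H →ₗ[k] B) {x : B}
    (hg : ∀ l, Commute (g l) x) :
    LinearMap.mulRight k x ∘ₗ conv f g = conv (LinearMap.mulRight k x ∘ₗ f) g := by
  ext l
  simp only [conv, LinearMap.coe_comp, Function.comp_apply]
  induction Coalgebra.comul (R := k) l using TensorProduct.induction_on with
  | zero => simp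
  | tmul a b => simp [mul_assoc, (hg b).eq]
  | add s t hs ht => simp_all [add_mul]

theorem mulRight_comp_conv_of_mulRight_comp_eq {φ f g : H →ₗ[k] B} {x : B}
    (hf : LinearMap.mulRight k x ∘ₗ f = conv φ f) (hg : ∀ l, Commute (g l) x) :
    LinearMap.mulRight k x ∘ₗ conv f g = conv φ (conv f g) := by
  rw [mulRight_comp_conv_of_commute f g hg, hf, conv_assoc]

theorem comp_conv_of_map_mul {B' : Type} [Ring B'] [Algebra k B'] (ρ : B →ₗ[k] B')
    (hρ : ∀ x y, ρ (x * y) = ρ x * ρ y) (f g : H →ₗ[k] B) :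
    ρ ∘ₗ conv f g = conv (ρ ∘ₗ f) (ρ ∘ₗ g) :=
  LinearMap.nonUnitalAlgHom_comp_convMul_distrib { ρ with map_mul' := hρ, map_zero' := ρ.map_zero }
    (toConv f) (toConv g)

theorem map_comm_comul_eq_conv (φ : H →ₗ[k] B) (ψ : H →ₗ[k] H) :
    TensorProduct.map φ ψ ∘ₗ (TensorProduct.comm k H H).toLinearMap ∘ₗ Coalgebra.comul =
      conv ((Algebra.TensorProduct.includeRight : H →ₐ[k] B ⊗[k] H).toLinearMap ∘ₗ ψ)
        ((Algebra.TensorProduct.includeLeft : B →ₐ[k] B ⊗[k] H).toLinearMap ∘ₗ φ) := by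
  ext l
  simp only [conv, LinearMap.coe_comp, Function.comp_apply]
  induction Coalgebra.comul (R := k) l using TensorProduct.induction_on with
  | zero => simp
  | tmul a b => simp
  | add s t hs ht => simp_all

theorem comod_conv_of_comod_of_coinvariant {ρ : B →ₗ[k] B ⊗[k] H}
    (hρ_mul : ∀ x y : B, ρ (x * y) = ρ x * ρ y) {f g : H →ₗ[k] B}
    (hf : ∀ h : H, ρ (f h) = (TensorProduct.map f (HopfAlgebra.antipode (R := k)))
      ((TensorProduct.comm k H H) (Coalgebra.comul (R := k) h)))
    (hg : ∀ h : H, ρ (g h) = g h ⊗ₜ[k] 1) (h : H) :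
    ρ (conv f g h) = (TensorProduct.map (conv f g) (HopfAlgebra.antipode (R := k)))
      ((TensorProduct.comm k H H) (Coalgebra.comul (R := k) h)) := by
  set ι := (Algebra.TensorProduct.includeLeft : B →ₐ[k] B ⊗[k] H).toLinearMap
  set σ := (Algebra.TensorProduct.includeRight : H →ₐ[k] B ⊗[k] H).toLinearMap ∘ₗ
    HopfAlgebra.antipode (R := k)
  have hf' : ρ ∘ₗ f = conv σ (ι ∘ₗ f) := by
    rw [← map_comm_comul_eq_conv]
    exact LinearMap.ext hf
  have hg' : ρ ∘ₗ g = ι ∘ₗ g := LinearMap.ext hg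
  have hι : ∀ x y, ι (x * y) = ι x * ι y := map_mul (Algebra.TensorProduct.includeLeft (S := k))
  suffices ρ ∘ₗ conv f g = conv σ (ι ∘ₗ conv f g) from
    (LinearMap.congr_fun this h).trans
      (LinearMap.congr_fun (map_comm_comul_eq_conv (conv f g) _) h).symm
  rw [comp_conv_of_map_mul ρ hρ_mul, hf', hg', conv_assoc, comp_conv_of_map_mul ι hι]

end Convolution

namespace IsPartiallyCleft

variable {k H B : Type} [CommRing k] [Ring H] [HopfAlgebra k H] [Ring B] [Algebra k B]
  {ρ : B →ₗ[k] B ⊗[k] H} {γ γ' : H →ₗ[k] B}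

theorem conv_conv_eq_self (hc : IsPartiallyCleft ρ γ γ') : conv γ (conv γ' γ) = γ := by
  ext h
  conv_rhs => rw [← hc.expand (γ h), hc.comod h]
  simp only [conv, LinearMap.coe_comp, Function.comp_apply,
    ← LinearMap.comp_apply (LinearMap.lTensor B _), LinearMap.lTensor_comp_map, LinearMap.comp_id]

theorem mulRight_comp_eq_conv (hc : IsPartiallyCleft ρ γ γ') (h : H) :
    LinearMap.mulRight k (conv γ' γ h) ∘ₗ γ' = conv (conv γ' γ ∘ₗ LinearMap.mulLeft k h) γ' := by
  ext l
  obtain ⟨S, hS⟩ := TensorProduct.exists_finset (Coalgebra.comul (R := k) l)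
  rw [LinearMap.comp_apply, LinearMap.mulRight_apply, hc.six h l _ S _ _ hS,
    conv_apply_of_comul_eq_sum _ _ hS]
  rfl

theorem of_conv_eq (hc : IsPartiallyCleft ρ γ γ') {δ : H →ₗ[k] B}
    (he : conv γ δ = conv γ γ') (he' : conv δ γ = conv γ' γ)
    (hcomod : ∀ h : H, ρ (δ h) = (TensorProduct.map δ (HopfAlgebra.antipode (R := k)))
      ((TensorProduct.comm k H H) (Coalgebra.comul (R := k) h)))
    (hsix : ∀ h : H, LinearMap.mulRight k (conv γ' γ h) ∘ₗ δ =
      conv (conv γ' γ ∘ₗ LinearMap.mulLeft k h) δ) :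
    IsPartiallyCleft ρ γ δ where
  map_one := hc.map_one
  comod := hc.comod
  comod' := hcomod
  conv_coinv := he ▸ hc.conv_coinv
  conv_central := he ▸ hc.conv_central
  conv'_comm := he' ▸ hc.conv'_comm
  expand := he' ▸ hc.expand
  five := he ▸ hc.five
  six h l _ _ _ _ hl := by
    rw [he', ← LinearMap.mulRight_apply (R := k), ← LinearMap.comp_apply, hsix,
      conv_apply_of_comul_eq_sum _ _ hl]
    rfl
  seven := he ▸ he' ▸ hc.seven

end IsPartiallyCleft

theorem partiallyCleft_normalize_general
    {k H B : Type} [CommRing k] [Ring H] [HopfAlgebra k H]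
    [Ring B] [Algebra k B]
    (ρ : B →ₗ[k] B ⊗[k] H)
    (hρ_mul : ∀ x y : B, ρ (x * y) = ρ x * ρ y)
    (γ γ' : H →ₗ[k] B)
    (hcleft : IsPartiallyCleft ρ γ γ') :
    conv (conv (conv γ' (conv γ γ')) γ) (conv γ' (conv γ γ')) =
        conv γ' (conv γ γ') ∧
    conv γ (conv γ' (conv γ γ')) = conv γ γ' ∧
    conv (conv γ' (conv γ γ')) γ = conv γ' γ ∧
    IsPartiallyCleft ρ γ (conv γ' (conv γ γ')) := by
  obtain ⟨he, he', hreflexive⟩ := conv_conv_conv_of_conv_conv_eq_self hcleft.conv_conv_eq_self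
  have hcommute : ∀ h l, Commute (conv γ γ' l) (conv γ' γ h) := fun h l =>
    (hcleft.conv'_comm h _ (hcleft.conv_coinv l)).symm
  refine ⟨hreflexive, he, he', hcleft.of_conv_eq he he' ?_ fun h => ?_⟩
  · exact comod_conv_of_comod_of_coinvariant hρ_mul hcleft.comod' hcleft.conv_coinv
  · exact mulRight_comp_conv_of_mulRight_comp_eq (hcleft.mulRight_comp_eq_conv h) (hcommute h)

/-- Lemma 5.5: if `(γ, γ')` makes `A ⊆ B` a partially cleft extension, then
`γ̄ = γ' * γ * γ'` satisfies `γ̄ * γ * γ̄ = γ̄`, the pair `(γ, γ̄)` is again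
partially cleft, and `γ * γ̄ = γ * γ'`, `γ̄ * γ = γ' * γ`. -/
theorem partiallyCleft_normalize
    {k H B : Type} [CommRing k] [Ring H] [HopfAlgebra k H]
    [Ring B] [Algebra k B]
    (ρ : B →ₗ[k] B ⊗[k] H)
    (hρ_one : ρ 1 = 1 ⊗ₜ[k] 1)
    (hρ_mul : ∀ x y : B, ρ (x * y) = ρ x * ρ y)
    (hρ_coassoc : ∀ x : B,
      (TensorProduct.assoc k B H H) ((LinearMap.rTensor H ρ) (ρ x)) =
        (LinearMap.lTensor B (Coalgebra.comul (R := k))) (ρ x))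
    (hρ_counit : ∀ x : B,
      (TensorProduct.rid k B)
        ((LinearMap.lTensor B (Coalgebra.counit (R := k))) (ρ x)) = x)
    (γ γ' : H →ₗ[k] B)
    (hcleft : IsPartiallyCleft ρ γ γ') :
    conv (conv (conv γ' (conv γ γ')) γ) (conv γ' (conv γ γ')) =
        conv γ' (conv γ γ') ∧
    conv γ (conv γ' (conv γ γ')) = conv γ γ' ∧
    conv (conv γ' (conv γ γ')) γ = conv γ' γ ∧
    IsPartiallyCleft ρ γ (conv γ' (conv γ γ')) :=
  partiallyCleft_normalize_general ρ hρ_mul γ γ' hcleft
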